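/- arXiv:2405.08280 — 2 statements merged into one kernel-verified Lean document; each statement's English description precedes it below -/
import Mathlib

section
/- Let λ ∈ ℂ with Re(λ) > 0, let L ∈ ℝ^{n×n} be negative semi-definite (i.e., x^T L x ≤ 0 for all x, with L + L^T negative semi-definite), and let Ψ ∈ ℝ^{n×n} be a 0-1 diagonal matrix. Then the matrix I + Ψ((λI - L) - I) = λΨ - ΨL + (I - Ψ) is nonsingular. -/
open Matrix

/-- For λ ∈ ℂ with Re λ > 0, L ∈ ℝ^{n×n} negative semi-definite
(Re(x* L x) ≤ 0 for all complex x), and Ψ a 0-1 diagonal matrix, the matrix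
I + Ψ((λI - L) - I) is nonsingular. -/
theorem stmt6 (n : ℕ) (lam : ℂ) (hlam : 0 < lam.re)
    (L : Matrix (Fin n) (Fin n) ℝ)
    (hL : ∀ x : Fin n → ℂ,
      (star x ⬝ᵥ ((L.map Complex.ofReal) *ᵥ x)).re ≤ 0)
    (Ψ : Matrix (Fin n) (Fin n) ℝ)
    (hΨdiag : ∀ i j : Fin n, i ≠ j → Ψ i j = 0)
    (hΨ01 : ∀ i : Fin n, Ψ i i = 0 ∨ Ψ i i = 1) :
    IsUnit ((1 : Matrix (Fin n) (Fin n) ℂ) +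
      (Ψ.map Complex.ofReal) *
        ((lam • (1 : Matrix (Fin n) (Fin n) ℂ) - L.map Complex.ofReal) - 1)) := by
  set LC := L.map Complex.ofReal with hLC
  set ΨC := Ψ.map Complex.ofReal with hΨC
  set A : Matrix (Fin n) (Fin n) ℂ := lam • 1 - LC with hA
  rw [Matrix.isUnit_iff_isUnit_det, isUnit_iff_ne_zero]
  intro hdet
  obtain ⟨v, hv, hMv⟩ := Matrix.exists_mulVec_eq_zero_iff.2 hdet
  -- diagonal action of ΨC
  have hΨmul : ∀ (w : Fin n → ℂ) (i : Fin n), (ΨC *ᵥ w) i = (Ψ i i : ℂ) * w i := by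
    intro w i
    simp only [Matrix.mulVec, dotProduct, hΨC, Matrix.map_apply]
    rw [Finset.sum_eq_single i]
    · intro j _ hj
      rw [hΨdiag i j (Ne.symm hj)]
      simp
    · intro h; exact absurd (Finset.mem_univ i) h
  have hAv : A *ᵥ v = lam • v - LC *ᵥ v := by
    rw [hA, Matrix.sub_mulVec, Matrix.smul_mulVec, Matrix.one_mulVec]
  -- entrywise equation
  have hMi : ∀ i, v i + (Ψ i i : ℂ) * ((A *ᵥ v) i - v i) = 0 := by
    intro i
    have h := congrFun hMv i
    rw [Matrix.add_mulVec, Matrix.one_mulVec, ← Matrix.mulVec_mulVec] at h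
    have h2 : ((A - 1) *ᵥ v) i = (A *ᵥ v) i - v i := by
      rw [Matrix.sub_mulVec, Matrix.one_mulVec]; rfl
    rw [Pi.add_apply, hΨmul, h2] at h
    exact h
  have hcases : ∀ i, v i = 0 ∨ (A *ᵥ v) i = 0 := by
    intro i
    rcases hΨ01 i with h | h
    · left
      have := hMi i
      rw [h] at this
      simpa using this
    · right
      have := hMi i
      rw [h] at this
      simpa using this
  have hzero : star v ⬝ᵥ (A *ᵥ v) = 0 := by
    unfold dotProduct
    apply Finset.sum_eq_zero
    intro i _
    rcases hcases i with h | h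
    · simp [h]
    · simp [h]
  -- star v ⬝ᵥ v is a nonneg real
  set s : ℝ := ∑ i, Complex.normSq (v i) with hs
  have hsv : star v ⬝ᵥ v = (s : ℂ) := by
    unfold dotProduct
    rw [hs]
    push_cast
    apply Finset.sum_congr rfl
    intro i _
    rw [Pi.star_apply, RCLike.star_def, ← Complex.mul_conj]
    ring
  have hspos : 0 < s := by
    have hnn : ∀ i ∈ Finset.univ, (0 : ℝ) ≤ Complex.normSq (v i) :=
      fun i _ => Complex.normSq_nonneg _
    obtain ⟨i, hi⟩ := Function.ne_iff.1 hv
    have : 0 < Complex.normSq (v i) := by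
      simpa [Complex.normSq_pos] using hi
    exact lt_of_lt_of_le this (Finset.single_le_sum hnn (Finset.mem_univ i))
  have hdot : star v ⬝ᵥ (A *ᵥ v) = lam * (s : ℂ) - star v ⬝ᵥ (LC *ᵥ v) := by
    rw [hAv, dotProduct_sub, dotProduct_smul, hsv, smul_eq_mul]
  have hre : (star v ⬝ᵥ (A *ᵥ v)).re = lam.re * s - (star v ⬝ᵥ (LC *ᵥ v)).re := by
    rw [hdot, Complex.sub_re, Complex.mul_re]
    simp
  rw [hzero] at hre
  simp only [Complex.zero_re] at hre
  have hL' := hL v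
  nlinarith [mul_pos hlam hspos]
end

section
/- Let M = B ⊗ I_s - I_t ⊗ L where B ∈ ℝ^{N×N} is lower bidiagonal with diagonal entries 1/τ and subdiagonal entries -1/τ (τ > 0), and -L ∈ ℝ^{n×n} is a nonsingular M-matrix. Then M is invertible and M^{-1} is entrywise nonnegative. -/
open Matrix
open scoped Kronecker

section AuxMono

variable {m : Type*} [Fintype m] [DecidableEq m]

/-- A matrix is monotone-nonpositive if `A x ≤ 0` entrywise implies `x ≤ 0` entrywise. -/
def MonoMat (A : Matrix m m ℝ) : Prop :=
  ∀ x : m → ℝ, (∀ i, A.mulVec x i ≤ 0) → ∀ i, x i ≤ 0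

lemma monoMat_of_inv_nonneg (K : Matrix m m ℝ) (hU : IsUnit K)
    (hInv : ∀ i j, 0 ≤ K⁻¹ i j) : MonoMat K := by
  intro x hx i
  have h : K⁻¹.mulVec (K.mulVec x) = x := by
    rw [mulVec_mulVec, Matrix.nonsing_inv_mul K ((Matrix.isUnit_iff_isUnit_det K).mp hU),
      one_mulVec]
  calc x i = K⁻¹.mulVec (K.mulVec x) i := by rw [h]
    _ ≤ 0 := by
        simp only [mulVec, dotProduct]
        exact Finset.sum_nonpos fun j _ =>
          mul_nonpos_of_nonneg_of_nonpos (hInv i j) (hx j)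

lemma monoMat_smul_one_add (K : Matrix m m ℝ) (hZ : ∀ i j, i ≠ j → K i j ≤ 0)
    (hK : MonoMat K) (c : ℝ) (hc : 0 ≤ c) :
    MonoMat (c • (1 : Matrix m m ℝ) + K) := by
  intro x hx i
  set p : m → ℝ := fun j => max (x j) 0 with hp
  have hpx : ∀ j, x j ≤ p j := fun j => le_max_left _ _
  have hp0 : ∀ j, 0 ≤ p j := fun j => le_max_right _ _
  have key : ∀ i, K.mulVec p i ≤ 0 := by
    intro i
    by_cases hxi : 0 < x i
    · have h1 : K.mulVec p i ≤ K.mulVec x i := by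
        simp only [mulVec, dotProduct]
        apply Finset.sum_le_sum
        intro j _
        by_cases hji : j = i
        · subst hji
          rw [show p j = x j from max_eq_left hxi.le]
        · exact mul_le_mul_of_nonpos_left (hpx j) (hZ i j (Ne.symm hji))
      have h2 := hx i
      rw [add_mulVec, smul_mulVec, one_mulVec] at h2
      have h3 : 0 ≤ c * x i := mul_nonneg hc hxi.le
      simp only [Pi.add_apply, Pi.smul_apply, smul_eq_mul] at h2
      linarith
    · push_neg at hxi
      have hpi : p i = 0 := max_eq_right hxi
      simp only [mulVec, dotProduct]
      apply Finset.sum_nonpos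
      intro j _
      by_cases hji : j = i
      · subst hji; rw [hpi, mul_zero]
      · exact mul_nonpos_of_nonpos_of_nonneg (hZ i j (Ne.symm hji)) (hp0 j)
  have := hK p key i
  linarith [hpx i]

lemma isUnit_of_monoMat (A : Matrix m m ℝ) (hA : MonoMat A) : IsUnit A := by
  rw [Matrix.isUnit_iff_isUnit_det, isUnit_iff_ne_zero]
  intro hdet
  obtain ⟨v, hv, hAv⟩ := (Matrix.exists_mulVec_eq_zero_iff).mpr hdet
  have h1 : ∀ i, v i ≤ 0 := hA v (fun i => by rw [hAv]; exact le_refl 0)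
  have h2 : ∀ i, -v i ≤ 0 := by
    have hAv' : A.mulVec (-v) = 0 := by rw [Matrix.mulVec_neg, hAv, neg_zero]
    exact hA (-v) (fun i => by rw [hAv']; exact le_refl 0)
  apply hv
  funext i
  have := h2 i
  have := h1 i
  simp only [Pi.zero_apply]
  linarith

lemma inv_nonneg_of_monoMat (A : Matrix m m ℝ) (hA : MonoMat A) :
    ∀ i j, 0 ≤ A⁻¹ i j := by
  have hU := isUnit_of_monoMat A hA
  intro i j
  set v : m → ℝ := fun k => A⁻¹ k j with hv
  have hAv : ∀ k, A.mulVec v k = if k = j then 1 else 0 := by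
    intro k
    have h1 : A.mulVec v k = (A * A⁻¹) k j := by
      simp [mulVec, dotProduct, Matrix.mul_apply, hv]
    rw [h1, Matrix.mul_nonsing_inv A ((Matrix.isUnit_iff_isUnit_det A).mp hU)]
    simp [Matrix.one_apply]
  have hneg : ∀ k, A.mulVec (-v) k ≤ 0 := by
    intro k
    rw [Matrix.mulVec_neg]
    simp only [Pi.neg_apply, hAv]
    split <;> norm_num
  have := hA (-v) hneg i
  simp only [Pi.neg_apply] at this
  linarith

end AuxMono

/-- If -L is a nonsingular M-matrix, then the all-at-once matrix
M = B ⊗ I_s - I_t ⊗ L (B lower bidiagonal with 1/τ on the diagonal and -1/τ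
on the subdiagonal, τ > 0) is invertible with entrywise nonnegative inverse. -/
theorem stmt11 (n N : ℕ) (τ : ℝ) (hτ : 0 < τ)
    (L : Matrix (Fin n) (Fin n) ℝ)
    (hZ : ∀ i j, i ≠ j → (-L) i j ≤ 0)
    (hUnit : IsUnit (-L))
    (hInv : ∀ i j, 0 ≤ (-L)⁻¹ i j)
    (B : Matrix (Fin N) (Fin N) ℝ)
    (hB : ∀ i j : Fin N, B i j =
      if i = j then 1 / τ else if (i : ℕ) = (j : ℕ) + 1 then -(1 / τ) else 0)
    (M : Matrix (Fin N × Fin n) (Fin N × Fin n) ℝ)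
    (hM : M = B ⊗ₖ (1 : Matrix (Fin n) (Fin n) ℝ) -
      (1 : Matrix (Fin N) (Fin N) ℝ) ⊗ₖ L) :
    IsUnit M ∧ ∀ p q, 0 ≤ M⁻¹ p q := by
  set A : Matrix (Fin n) (Fin n) ℝ := (1 / τ) • (1 : Matrix (Fin n) (Fin n) ℝ) + (-L) with hA
  have hAmono : MonoMat A :=
    monoMat_smul_one_add (-L) hZ (monoMat_of_inv_nonneg (-L) hUnit hInv) (1 / τ)
      (by positivity)
  -- entrywise formula for M.mulVec
  have hMx : ∀ (x : Fin N × Fin n → ℝ) (i : Fin N) (a : Fin n),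
      M.mulVec x (i, a) = (∑ j, B i j * x (j, a)) + (∑ b, (-L) a b * x (i, b)) := by
    intro x i a
    rw [hM]
    simp only [mulVec, dotProduct, Fintype.sum_prod_type, Matrix.sub_apply, kroneckerMap_apply,
      one_apply, sub_mul, mul_ite, ite_mul, mul_one, mul_zero, zero_mul, one_mul,
      Finset.sum_sub_distrib, Finset.sum_ite_eq, Finset.sum_ite_eq', Finset.mem_univ, if_true,
      Matrix.neg_apply, neg_mul]
    rw [Finset.sum_comm]
    simp only [Finset.sum_ite_eq, Finset.mem_univ, if_true]
    rw [Finset.sum_neg_distrib, ← sub_eq_add_neg]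
  have hAx : ∀ (y : Fin n → ℝ) (a : Fin n),
      A.mulVec y a = (1 / τ) * y a + ∑ b, (-L) a b * y b := by
    intro y a
    rw [hA, add_mulVec, smul_mulVec, one_mulVec]
    simp [mulVec, dotProduct]
  have hMmono : MonoMat M := by
    intro x hx
    have main : ∀ k : ℕ, ∀ i : Fin N, (i : ℕ) = k → ∀ a : Fin n, x (i, a) ≤ 0 := by
      intro k
      induction k with
      | zero =>
        intro i hi
        apply hAmono (fun b => x (i, b))
        intro a
        have hB0 : (∑ j, B i j * x (j, a)) = (1 / τ) * x (i, a) := by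
          rw [Finset.sum_eq_single i]
          · rw [hB i i, if_pos rfl]
          · intro j _ hji
            rw [hB i j, if_neg (Ne.symm hji), if_neg (by omega), zero_mul]
          · simp
        have := hx (i, a)
        rw [hMx x i a, hB0] at this
        rw [hAx (fun b => x (i, b)) a]
        exact this
      | succ k ih =>
        intro i hi
        have hklt : k < N := by omega
        set i' : Fin N := ⟨k, hklt⟩ with hi'
        have hxprev : ∀ a, x (i', a) ≤ 0 := ih i' rfl
        apply hAmono (fun b => x (i, b))
        intro a
        have hB0 : (∑ j, B i j * x (j, a)) =
            (1 / τ) * x (i, a) - (1 / τ) * x (i', a) := by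
          have hii' : i ≠ i' := by
            intro h
            rw [h] at hi
            simp [hi'] at hi
          rw [← Finset.add_sum_erase _ _ (Finset.mem_univ i),
            ← Finset.add_sum_erase _ _ (Finset.mem_erase.mpr ⟨Ne.symm hii', Finset.mem_univ i'⟩)]
          rw [hB i i, if_pos rfl, hB i i', if_neg hii', if_pos (by rw [hi']; exact hi)]
          have hrest : ∑ j ∈ (Finset.univ.erase i).erase i', B i j * x (j, a) = 0 := by
            apply Finset.sum_eq_zero
            intro j hj
            rw [Finset.mem_erase, Finset.mem_erase] at hj
            have hj1 : j ≠ i' := hj.1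
            have hj2 : j ≠ i := hj.2.1
            rw [hB i j, if_neg (Ne.symm hj2), if_neg ?_, zero_mul]
            intro hcon
            apply hj1
            apply Fin.ext
            simp only [hi']
            omega
          rw [hrest]
          ring
        have hle := hx (i, a)
        rw [hMx x i a, hB0] at hle
        rw [hAx (fun b => x (i, b)) a]
        have hprev : 0 ≤ -((1 / τ) * x (i', a)) := by
          have := hxprev a
          have h1τ : 0 < 1 / τ := by positivity
          nlinarith
        linarith
    intro p
    exact main p.1 p.1 rfl p.2
  exact ⟨isUnit_of_monoMat M hMmono, inv_nonneg_of_monoMat M hMmono⟩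
end
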